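/- Let s ≥ 2 be an integer and γ ∈ ℝ, and let A = {y ∈ ℝ^s : y_1 + ⋯ + y_s = γ}. Then the s functions obtained by restricting E_0, E_2, E_3, …, E_s to A (i.e., the constant function 1 together with the restrictions of the elementary symmetric polynomials of degrees 2 through s) are linearly independent in the real vector space of functions from A to ℝ. -/

import Mathlib

/-!
Restrict everything to the line `t ↦ (γ - m t, t, …, t)` in `A` (with `s = m + 1`). Along it,
`E_0 = 1` and `E_{j+1} = (C(m, j+1) - m C(m, j)) t^(j+1) + γ C(m, j) t^j`, whose leading
coefficient is negative for `1 ≤ j ≤ m` since then `C(m, j+1) < m C(m, j)`. So the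
restrictions of `E_0, E_2, …, E_s` are polynomials in `t` of the pairwise distinct degrees
`0, 2, …, s`, hence linearly independent, and a linear relation on `A` would restrict to one on
the line.
-/

/-- The `j`-th elementary symmetric polynomial of `y : Fin s → ℝ`
(`E 0 = 1`, `E j = 0` for `j > s`). -/
noncomputable def esymm (s j : ℕ) (y : Fin s → ℝ) : ℝ :=
  ∑ t ∈ Finset.powersetCard j (Finset.univ : Finset (Fin s)), ∏ i ∈ t, y i

open Polynomial

namespace Multiset

variable {R : Type*} [CommSemiring R]

theorem esymm_cons_succ (c : R) (s : Multiset R) (j : ℕ) :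
    (c ::ₘ s).esymm (j + 1) = s.esymm (j + 1) + c * s.esymm j := by
  simp only [esymm, powersetCard_cons, map_add, sum_add, map_map, Function.comp_def, prod_cons,
    sum_map_mul_left]

theorem esymm_replicate (m : ℕ) (t : R) (j : ℕ) :
    (replicate m t).esymm j = m.choose j * t ^ j := by
  induction m generalizing j with
  | zero => cases j <;> simp [esymm, powersetCard_zero_right]
  | succ m ih =>
    cases j with
    | zero => simp [esymm]
    | succ j =>
      rw [replicate_succ, esymm_cons_succ, ih, ih, Nat.choose_succ_succ']
      push_cast
      ring

theorem map_esymm {S : Type*} [CommSemiring S] (f : R →+* S) (s : Multiset R) (j : ℕ) :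
    f (s.esymm j) = (s.map f).esymm j := by
  simp only [esymm, map_multiset_sum, map_multiset_prod, powersetCard_map, map_map,
    Function.comp_def]

end Multiset

theorem Nat.choose_succ_lt_mul_choose {m j : ℕ} (hj : 0 < j) (hjm : j ≤ m) :
    m.choose (j + 1) < m * m.choose j := by
  have h := Nat.choose_succ_right_eq m j
  have hpos : 0 < m.choose j := Nat.choose_pos hjm
  nlinarith [Nat.sub_le m j]

namespace Polynomial

variable {R ι : Type*} [CommRing R] [IsDomain R]

open Function in
theorem linearIndependent_of_natDegree_injective {p : ι → R[X]} (hp : ∀ i, p i ≠ 0)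
    (hdeg : Injective (natDegree ∘ p)) : LinearIndependent R p := by
  refine linearIndependent_iff'.mpr fun s g hsum i hi => ?_
  have hdeg_smul : ∀ j, g j ≠ 0 → (g j • p j).degree = (p j).natDegree := fun j hj => by
    rw [degree_smul_of_smul_regular _ (IsSMulRegular.of_ne_zero hj), degree_eq_natDegree (hp j)]
  have hdisj : Set.Pairwise {j | j ∈ s ∧ g j • p j ≠ 0} (Ne on fun j => (g j • p j).degree) := by
    intro j ⟨_, hj⟩ k ⟨_, hk⟩ hjk
    simp only [onFun]
    rw [hdeg_smul j (left_ne_zero_of_smul hj), hdeg_smul k (left_ne_zero_of_smul hk)]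
    exact fun h => hjk (hdeg (Nat.cast_injective h))
  have hbot := degree_sum_eq_of_disjoint (fun j => g j • p j) s hdisj
  rw [hsum, degree_zero, eq_comm, Finset.sup_eq_bot_iff] at hbot
  exact (smul_eq_zero_iff_left (hp i)).mp (degree_eq_bot.mp (hbot i hi))

theorem linearIndependent_of_comp_eq_eval [Infinite R] {X : Type*} {f : ι → X → R} (c : R → X)
    {p : ι → R[X]} (hfp : ∀ i t, f i (c t) = (p i).eval t) (hp : LinearIndependent R p) :
    LinearIndependent R f := by
  refine .of_comp (LinearMap.funLeft R R c) ?_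
  have hcomp : LinearMap.funLeft R R c ∘ f = (LinearMap.pi fun t => leval t) ∘ p := by
    ext i t
    exact hfp i t
  rw [hcomp]
  exact hp.map' _ (LinearMap.ker_eq_bot.mpr fun _ _ h => funext fun t => congrFun h t)

end Polynomial

def hyperplaneLine (m : ℕ) (γ t : ℝ) : {y : Fin (m + 1) → ℝ // ∑ i, y i = γ} :=
  ⟨Fin.cons (γ - m * t) fun _ => t, by simp [Fin.sum_cons]⟩

noncomputable def esymmAlongLine (m : ℕ) (γ : ℝ) (j : ℕ) : ℝ[X] :=
  ((C γ - C (m : ℝ) * X) ::ₘ Multiset.replicate m X).esymm j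

theorem esymm_hyperplaneLine (m : ℕ) (γ t : ℝ) (j : ℕ) :
    esymm (m + 1) j (hyperplaneLine m γ t) = (esymmAlongLine m γ j).eval t := by
  rw [esymm, ← Finset.esymm_map_val, esymmAlongLine, ← coe_evalRingHom, Multiset.map_esymm]
  congr 1
  simp [hyperplaneLine, Fin.univ_val_map, List.ofFn_succ, List.ofFn_const, ← Multiset.cons_coe,
    Multiset.coe_replicate]

theorem esymmAlongLine_zero (m : ℕ) (γ : ℝ) : esymmAlongLine m γ 0 = 1 := by
  simp [esymmAlongLine, Multiset.esymm]

theorem esymmAlongLine_succ (m : ℕ) (γ : ℝ) (j : ℕ) :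
    esymmAlongLine m γ (j + 1) =
      C ((m.choose (j + 1) : ℝ) - m * m.choose j) * X ^ (j + 1) + C (γ * m.choose j) * X ^ j := by
  rw [esymmAlongLine, Multiset.esymm_cons_succ, Multiset.esymm_replicate,
    Multiset.esymm_replicate]
  simp only [map_sub, map_mul, map_natCast]
  ring

theorem natDegree_esymmAlongLine {m j : ℕ} (γ : ℝ) (hj : j ≠ 1) (hjm : j ≤ m + 1) :
    (esymmAlongLine m γ j).natDegree = j := by
  cases j with
  | zero => simp [esymmAlongLine_zero]
  | succ k =>
    have hlead : (m.choose (k + 1) : ℝ) - m * m.choose k ≠ 0 :=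
      (sub_neg.mpr (mod_cast Nat.choose_succ_lt_mul_choose (by omega) (by omega))).ne
    rw [esymmAlongLine_succ]
    compute_degree <;> first | exact hlead | omega

theorem esymmAlongLine_ne_zero {m j : ℕ} (γ : ℝ) (hj : j ≠ 1) (hjm : j ≤ m + 1) :
    esymmAlongLine m γ j ≠ 0 := by
  rcases eq_or_ne j 0 with rfl | hj0
  · simp [esymmAlongLine_zero]
  · exact ne_zero_of_natDegree_gt
      ((natDegree_esymmAlongLine γ hj hjm).symm ▸ Nat.pos_of_ne_zero hj0)

/-- On the hyperplane `A = {y ∈ ℝˢ : y₁ + ⋯ + y_s = γ}` (for `s ≥ 2`), the `s`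
functions `E₀ = 1, E₂, E₃, …, E_s` (restricted to `A`) are linearly independent
in the space of real-valued functions on `A`. -/
theorem esymm_restrictions_linearIndependent (s : ℕ) (hs : 2 ≤ s) (γ : ℝ) :
    LinearIndependent ℝ
      (fun (j : (insert 0 (Finset.Icc 2 s) : Finset ℕ)) =>
        (fun y : {y : Fin s → ℝ // ∑ i, y i = γ} => esymm s j.val y.val)) := by
  obtain ⟨m, rfl⟩ : ∃ m, s = m + 1 := ⟨s - 1, by omega⟩
  have hindex : ∀ j ∈ (insert 0 (Finset.Icc 2 (m + 1)) : Finset ℕ), j ≠ 1 ∧ j ≤ m + 1 := by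
    intro j hj
    simp only [Finset.mem_insert, Finset.mem_Icc] at hj
    omega
  have hdeg : ∀ j : (insert 0 (Finset.Icc 2 (m + 1)) : Finset ℕ),
      (esymmAlongLine m γ j).natDegree = j := fun j =>
    natDegree_esymmAlongLine γ (hindex j j.2).1 (hindex j j.2).2
  refine linearIndependent_of_comp_eq_eval (hyperplaneLine m γ)
    (fun j t => esymm_hyperplaneLine m γ t j) ?_
  exact linearIndependent_of_natDegree_injective
    (fun j => esymmAlongLine_ne_zero γ (hindex j j.2).1 (hindex j j.2).2)
    (fun j k h => Subtype.ext ((hdeg j).symm.trans (h.trans (hdeg k))))
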